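/- Let α be irrational with continued fraction convergents l_k/q_k satisfying q_{k+1} ≥ e^{q_k} for all k ≥ 1. Set q_{−k} := −q_k, let (c_k)_{k ∈ ℤ∖{0}} be real numbers with cّ_{−k} = c_k and |c_k| ≤ C for all k, where C ≥ 1, and define h(x) = ∑_{k ≠ 0} c_k (1 − e(q_k α)) e(q_k x) (this series converges absolutely for every x). Then for every integer n ≥ 1, ∑_{j=0}^{n−1} h(jα) = ∑_{k ≠ 0} c_k (1 − e(n q_k α)), the right-hand series also being absolutely convergent. -/

import Mathlib

open Filter

/-- `e(x) = exp(2πix)`. -/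
noncomputable def e (x : ℝ) : ℂ := Complex.exp (2 * Real.pi * Complex.I * x)

/-- Gauss-map iterates of `α`, used to define the continued fraction expansion. -/
noncomputable def cfX (α : ℝ) : ℕ → ℝ
  | 0 => α
  | k + 1 => (Int.fract (cfX α k))⁻¹

/-- Partial quotients `a_k` of the continued fraction expansion of `α`. -/
noncomputable def cfA (α : ℝ) (k : ℕ) : ℤ := ⌊cfX α k⌋

/-- Denominators `q_k` of the continued fraction convergents of `α`:
`q₀ = 1`, `q₁ = a₁`, `q_k = a_k q_{k-1} + q_{k-2}`. -/
noncomputable def cfQ (α : ℝ) : ℕ → ℤ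
  | 0 => 1
  | 1 => cfA α 1
  | k + 2 => cfA α (k + 2) * cfQ α (k + 1) + cfQ α k

/-- Numerators `l_k` of the continued fraction convergents of `α`:
`l₀ = a₀`, `l₁ = a₀a₁ + 1`, `l_k = a_k l_{k-1} + l_{k-2}`. -/
noncomputable def cfL (α : ℝ) : ℕ → ℤ
  | 0 => cfA α 0
  | 1 => cfA α 0 * cfA α 1 + 1
  | k + 2 => cfA α (k + 2) * cfL α (k + 1) + cfL α k

/-- `q_k` extended to negative indices by `q_{-k} = -q_k`. -/
noncomputable def cfQZ (α : ℝ) (k : ℤ) : ℤ :=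
  if 0 ≤ k then cfQ α k.toNat else -cfQ α (-k).toNat

open Finset Real

/-!
For each `k` the sum over `j` is geometric: with `z = e(q_k α)`,
`∑_{j<n} (1 - z) z^j = 1 - z^n`, so the identity follows by exchanging the finite sum with the
series. Absolute convergence comes from `‖1 - e(N q_k α)‖ ≤ 2πN |q_k α - l_k| = 2πN β_k`, where
`β_k = ∏_{i ≤ k} {x_i}` is the product of the fractional parts of the Gauss-map iterates. It obeys
`β_{k+2} = β_k - a_{k+2} β_{k+1} ≤ β_k - β_{k+1}`, so `∑_k β_{k+2} ≤ β_0` by telescoping.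
-/

lemma e_add (x y : ℝ) : e (x + y) = e x * e y := by
  simp only [e, ← Complex.exp_add]; push_cast; ring_nf

lemma e_intCast (m : ℤ) : e m = 1 := by
  rw [e, ← Complex.exp_int_mul_two_pi_mul_I m]; push_cast; ring_nf

lemma e_sub_intCast (x : ℝ) (m : ℤ) : e (x - m) = e x := by
  rw [← mul_one (e (x - m)), ← e_intCast m, ← e_add, sub_add_cancel]

lemma e_natCast_mul (n : ℕ) (x : ℝ) : e (n * x) = e x ^ n := by
  rw [e, e, ← Complex.exp_nat_mul]; push_cast; ring_nf

lemma e_eq_exp_I_mul (x : ℝ) : e x = Complex.exp (Complex.I * (2 * π * x : ℝ)) := by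
  rw [e]; push_cast; ring_nf

lemma norm_e (x : ℝ) : ‖e x‖ = 1 := by
  rw [e_eq_exp_I_mul, mul_comm, Complex.norm_exp_ofReal_mul_I]

lemma norm_one_sub_e_le (x : ℝ) : ‖1 - e x‖ ≤ 2 * π * |x| := by
  rw [norm_sub_rev, e_eq_exp_I_mul]
  refine Real.norm_exp_I_mul_ofReal_sub_one_le.trans_eq ?_
  rw [Real.norm_eq_abs, abs_mul, abs_of_pos (by positivity : 0 < 2 * π)]

lemma norm_one_sub_e_le_abs_sub_intCast (x : ℝ) (m : ℤ) : ‖1 - e x‖ ≤ 2 * π * |x - m| := by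
  simpa only [e_sub_intCast] using norm_one_sub_e_le (x - m)

lemma sum_range_mul_e_natCast_mul (x : ℝ) (n : ℕ) :
    ∑ j ∈ range n, (1 - e x) * e (j * x) = 1 - e (n * x) := by
  simp only [e_natCast_mul, ← mul_sum, mul_neg_geom_sum]

section ContinuedFraction

variable {α : ℝ}

lemma irrational_cfX (hα : Irrational α) : ∀ k, Irrational (cfX α k)
  | 0 => hα
  | k + 1 => ((irrational_cfX hα k).sub_intCast _).inv

lemma fract_cfX_eq (α : ℝ) (k : ℕ) : Int.fract (cfX α k) = cfX α k - cfA α k := rfl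

lemma fract_cfX_pos (hα : Irrational α) (k : ℕ) : 0 < Int.fract (cfX α k) :=
  (Int.fract_nonneg _).lt_of_ne (((irrational_cfX hα k).sub_intCast _).ne_zero.symm)

lemma fract_cfX_mul_cfX_succ (hα : Irrational α) (k : ℕ) :
    Int.fract (cfX α k) * cfX α (k + 1) = 1 :=
  mul_inv_cancel₀ (fract_cfX_pos hα k).ne'

lemma one_le_cfA (hα : Irrational α) {k : ℕ} (hk : k ≠ 0) : 1 ≤ cfA α k := by
  obtain ⟨k, rfl⟩ := Nat.exists_eq_succ_of_ne_zero hk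
  rw [cfA, Int.le_floor, Int.cast_one]
  exact one_le_inv₀ (fract_cfX_pos hα k) |>.mpr (Int.fract_lt_one _).le

noncomputable def cfBeta (α : ℝ) (k : ℕ) : ℝ := ∏ i ∈ range (k + 1), Int.fract (cfX α i)

lemma cfBeta_pos (hα : Irrational α) (k : ℕ) : 0 < cfBeta α k :=
  prod_pos fun i _ => fract_cfX_pos hα i

lemma cfBeta_zero (α : ℝ) : cfBeta α 0 = Int.fract α := prod_range_one _

lemma cfBeta_succ (α : ℝ) (k : ℕ) : cfBeta α (k + 1) = cfBeta α k * Int.fract (cfX α (k + 1)) :=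
  prod_range_succ _ _

lemma cfBeta_one (hα : Irrational α) : cfBeta α 1 = 1 - cfA α 1 * cfBeta α 0 := by
  have h : Int.fract α * cfX α 1 = 1 := fract_cfX_mul_cfX_succ hα 0
  rw [cfBeta_succ, fract_cfX_eq, cfBeta_zero]
  linear_combination h

lemma cfBeta_add_two (hα : Irrational α) (k : ℕ) :
    cfBeta α (k + 2) = cfBeta α k - cfA α (k + 2) * cfBeta α (k + 1) := by
  rw [cfBeta_succ α (k + 1), fract_cfX_eq, mul_sub, cfBeta_succ α k, mul_assoc,
    fract_cfX_mul_cfX_succ hα, mul_one]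
  ring

lemma cfQ_mul_sub_cfL (hα : Irrational α) :
    ∀ k, (cfQ α k : ℝ) * α - cfL α k = (-1) ^ k * cfBeta α k
  | 0 => by
    rw [cfBeta_zero, ← Int.self_sub_floor]
    simp only [cfQ, cfL, cfA, cfX]
    push_cast; ring
  | 1 => by
    rw [cfBeta_one hα, cfBeta_zero, ← Int.self_sub_floor]
    simp only [cfQ, cfL, cfA, cfX]
    push_cast; ring
  | k + 2 => by
    have h₀ := cfQ_mul_sub_cfL hα k
    have h₁ := cfQ_mul_sub_cfL hα (k + 1)
    rw [cfBeta_add_two hα]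
    simp only [cfQ, cfL]
    push_cast
    linear_combination (cfA α (k + 2) : ℝ) * h₁ + h₀

lemma cfBeta_add_two_le (hα : Irrational α) (k : ℕ) :
    cfBeta α (k + 2) ≤ cfBeta α k - cfBeta α (k + 1) := by
  have ha : (1 : ℝ) ≤ cfA α (k + 2) := by exact_mod_cast one_le_cfA hα (by omega)
  rw [cfBeta_add_two hα]
  nlinarith [cfBeta_pos hα (k + 1)]

lemma summable_cfBeta (hα : Irrational α) : Summable (cfBeta α) := by
  refine (summable_nat_add_iff 2).mp <|
    summable_of_sum_range_le (c := cfBeta α 0) (fun k => (cfBeta_pos hα _).le) fun n => ?_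
  calc ∑ k ∈ range n, cfBeta α (k + 2)
      ≤ ∑ k ∈ range n, (cfBeta α k - cfBeta α (k + 1)) :=
        sum_le_sum fun k _ => cfBeta_add_two_le hα k
    _ = cfBeta α 0 - cfBeta α n := sum_range_sub' _ _
    _ ≤ cfBeta α 0 := sub_le_self _ (cfBeta_pos hα n).le

lemma exists_abs_cfQZ_mul_sub_eq_cfBeta (hα : Irrational α) (k : ℤ) :
    ∃ m : ℤ, |(cfQZ α k : ℝ) * α - m| = cfBeta α k.natAbs := by
  have hdist : |(cfQ α k.natAbs : ℝ) * α - cfL α k.natAbs| = cfBeta α k.natAbs := by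
    rw [cfQ_mul_sub_cfL hα, abs_mul, abs_pow, abs_neg, abs_one, one_pow, one_mul,
      abs_of_pos (cfBeta_pos hα _)]
  unfold cfQZ
  split_ifs with hk
  · exact ⟨cfL α k.natAbs, by rwa [show k.toNat = k.natAbs by omega]⟩
  · refine ⟨-cfL α k.natAbs, ?_⟩
    rw [show (-k).toNat = k.natAbs by omega, ← hdist, ← abs_neg]
    push_cast; ring_nf

lemma norm_one_sub_e_natCast_mul_cfQZ_le (hα : Irrational α) (N : ℕ) (k : ℤ) :
    ‖1 - e (N * cfQZ α k * α)‖ ≤ 2 * π * N * cfBeta α k.natAbs := by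
  obtain ⟨m, hm⟩ := exists_abs_cfQZ_mul_sub_eq_cfBeta hα k
  calc ‖1 - e (N * cfQZ α k * α)‖ ≤ 2 * π * |N * cfQZ α k * α - ((N * m : ℤ) : ℝ)| :=
        norm_one_sub_e_le_abs_sub_intCast _ _
    _ = 2 * π * (N * |cfQZ α k * α - m|) := by
        rw [show (N * cfQZ α k * α - ((N * m : ℤ) : ℝ)) = N * (cfQZ α k * α - m) by push_cast; ring,
          abs_mul, Nat.abs_cast]
    _ = 2 * π * N * cfBeta α k.natAbs := by rw [hm]; ring

lemma summable_norm_ite_mul_one_sub_e (hα : Irrational α) {C : ℝ} {c : ℤ → ℝ}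
    (hc : ∀ k : ℤ, k ≠ 0 → |c k| ≤ C) (N : ℕ) :
    Summable fun k : ℤ => ‖if k = 0 then (0 : ℂ) else (c k : ℂ) * (1 - e (N * cfQZ α k * α))‖ := by
  have hC : 0 ≤ C := (abs_nonneg _).trans (hc 1 one_ne_zero)
  have hβ : Summable fun k : ℤ => cfBeta α k.natAbs :=
    .of_nat_of_neg (by simpa using summable_cfBeta hα) (by simpa using summable_cfBeta hα)
  refine (hβ.mul_left (C * (2 * π * N))).of_nonneg_of_le (fun _ => norm_nonneg _) fun k => ?_
  split_ifs with hk
  · rw [norm_zero]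
    have := cfBeta_pos hα k.natAbs
    positivity
  · rw [norm_mul, Complex.norm_real, Real.norm_eq_abs]
    exact (mul_le_mul (hc k hk) (norm_one_sub_e_natCast_mul_cfQZ_le hα N k) (norm_nonneg _)
      hC).trans_eq (by ring)

end ContinuedFraction

theorem birkhoff_sum_telescopes_general (α : ℝ) (hα : Irrational α)
    (C : ℝ) (c : ℤ → ℝ)
    (hc : ∀ k : ℤ, k ≠ 0 → c (-k) = c k ∧ |c k| ≤ C) :
    (∀ x : ℝ, Summable (fun k : ℤ => ‖if k = 0 then (0 : ℂ) else
        (c k : ℂ) * (1 - e ((cfQZ α k : ℝ) * α)) * e ((cfQZ α k : ℝ) * x)‖)) ∧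
    ∀ n : ℕ, 1 ≤ n →
      Summable (fun k : ℤ => ‖if k = 0 then (0 : ℂ) else
          (c k : ℂ) * (1 - e ((n : ℝ) * (cfQZ α k : ℝ) * α))‖) ∧
      ∑ j ∈ Finset.range n,
          (∑' k : ℤ, if k = 0 then (0 : ℂ) else
            (c k : ℂ) * (1 - e ((cfQZ α k : ℝ) * α)) * e ((cfQZ α k : ℝ) * (j * α)))
        = ∑' k : ℤ, if k = 0 then (0 : ℂ) else
            (c k : ℂ) * (1 - e ((n : ℝ) * (cfQZ α k : ℝ) * α)) := by
  have hsum := summable_norm_ite_mul_one_sub_e hα fun k hk => (hc k hk).2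
  have hsum_orbit : ∀ x : ℝ, Summable fun k : ℤ => ‖if k = 0 then (0 : ℂ) else
      (c k : ℂ) * (1 - e (cfQZ α k * α)) * e (cfQZ α k * x)‖ := fun x =>
    (hsum 1).congr fun k => by split_ifs <;> simp [norm_e]
  refine ⟨hsum_orbit, fun n _ => ⟨hsum n, ?_⟩⟩
  rw [← Summable.tsum_finsetSum fun j _ => (hsum_orbit _).of_norm]
  refine tsum_congr fun k => ?_
  split_ifs
  · exact sum_const_zero
  · rw [mul_assoc _ (cfQZ α k : ℝ), ← sum_range_mul_e_natCast_mul, mul_sum]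
    refine sum_congr rfl fun j _ => ?_
    rw [mul_assoc, mul_left_comm (cfQZ α k : ℝ)]

/-- the Birkhoff sums of `h(x) = ∑_{k ≠ 0} c_k (1 - e(q_k α)) e(q_k x)`
along the orbit of `0` under `x ↦ x + α` telescope:
`∑_{j=0}^{n-1} h(jα) = ∑_{k ≠ 0} c_k (1 - e(n q_k α))`, all series converging absolutely. -/
theorem birkhoff_sum_telescopes (α : ℝ) (hα : Irrational α)
    (hgrow : ∀ k : ℕ, 1 ≤ k → Real.exp (cfQ α k) ≤ (cfQ α (k + 1) : ℝ))
    (C : ℝ) (hC : 1 ≤ C) (c : ℤ → ℝ)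
    (hc : ∀ k : ℤ, k ≠ 0 → c (-k) = c k ∧ |c k| ≤ C) :
    (∀ x : ℝ, Summable (fun k : ℤ => ‖if k = 0 then (0 : ℂ) else
        (c k : ℂ) * (1 - e ((cfQZ α k : ℝ) * α)) * e ((cfQZ α k : ℝ) * x)‖)) ∧
    ∀ n : ℕ, 1 ≤ n →
      Summable (fun k : ℤ => ‖if k = 0 then (0 : ℂ) else
          (c k : ℂ) * (1 - e ((n : ℝ) * (cfQZ α k : ℝ) * α))‖) ∧
      ∑ j ∈ Finset.range n,
          (∑' k : ℤ, if k = 0 then (0 : ℂ) else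
            (c k : ℂ) * (1 - e ((cfQZ α k : ℝ) * α)) * e ((cfQZ α k : ℝ) * (j * α)))
        = ∑' k : ℤ, if k = 0 then (0 : ℂ) else
            (c k : ℂ) * (1 - e ((n : ℝ) * (cfQZ α k : ℝ) * α)) :=
  birkhoff_sum_telescopes_general α hα C c hc
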